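/- For the inverse Gaussian density p(t,y) = (t/(σ√(2π y³))) exp(−(μy−t)²/(2yσ²)) on y>0, the Laplace transform in y satisfies ∫₀^∞ e^{−αy} p(t,y) dy = exp(−(t/σ²)(√(2ασ²+μ²) − μ)) for all α ≥ 0, t > 0, μ > 0, σ > 0. -/

import Mathlib

/-!
Multiplying by `exp (-α y)` only changes the drift:
`exp (-α y) p_μ(y) = exp (-(t / σ²) (ν - μ)) p_ν(y)` with `ν = √(2ασ² + μ²)`, so it suffices to
show that the inverse Gaussian density has total mass one. With `φ(y) = (μ y - t) / (σ √y)` and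
`g` the standard normal density, `p = φ' · g ∘ φ - φ / (2 y) · g ∘ φ` on `(0, ∞)`. The first term
integrates to `∫ g = 1` because `φ` maps `(0, ∞)` increasingly onto `ℝ`; the second integrates to
`0` because the involution `y ↦ (t / μ)² / y` reverses the sign of `φ`.
-/

open MeasureTheory Real Set

/-- Inverse Gaussian transition density (starting at 0): `p μ σ t y`. -/
noncomputable def igDensity (μ σ t y : ℝ) : ℝ :=
  if 0 < y then (t / (σ * Real.sqrt (2 * Real.pi * y ^ 3))) *
    Real.exp (-(μ * y - t) ^ 2 / (2 * y * σ ^ 2)) else 0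

open ProbabilityTheory

lemma gaussianPDFReal_zero_neg (v : NNReal) (x : ℝ) :
    gaussianPDFReal 0 v (-x) = gaussianPDFReal 0 v x := by
  simp [gaussianPDFReal]

noncomputable def igScore (μ σ t y : ℝ) : ℝ := (μ * y - t) / (σ * √y)

noncomputable def igScoreDeriv (μ σ t y : ℝ) : ℝ := (μ * y + t) / (2 * σ * (y * √y))

section igScore

variable {μ σ t : ℝ}

lemma hasDerivAt_igScore (hσ : σ ≠ 0) {y : ℝ} (hy : 0 < y) :
    HasDerivAt (igScore μ σ t) (igScoreDeriv μ σ t y) y := by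
  have hsqrt : 0 < √y := sqrt_pos.2 hy
  have h := (((hasDerivAt_id y).const_mul μ).sub_const t).div
    ((hasDerivAt_sqrt hy.ne').const_mul σ) (by positivity)
  refine h.congr_deriv ?_
  simp only [igScoreDeriv, id]
  field_simp
  linear_combination (μ * y - t) * sq_sqrt hy.le

lemma continuousOn_igScore (hσ : σ ≠ 0) : ContinuousOn (igScore μ σ t) (Ioi 0) :=
  fun _ hy ↦ (hasDerivAt_igScore hσ hy).continuousAt.continuousWithinAt

lemma igScoreDeriv_pos (hμ : 0 ≤ μ) (hσ : 0 < σ) (ht : 0 < t) {y : ℝ} (hy : 0 < y) :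
    0 < igScoreDeriv μ σ t y := by
  have := sqrt_pos.2 hy
  unfold igScoreDeriv
  positivity

lemma strictMonoOn_igScore (hμ : 0 ≤ μ) (hσ : 0 < σ) (ht : 0 < t) :
    StrictMonoOn (igScore μ σ t) (Ioi 0) := by
  refine strictMonoOn_of_hasDerivWithinAt_pos (f' := igScoreDeriv μ σ t) (convex_Ioi 0)
    (continuousOn_igScore hσ.ne') ?_ ?_ <;>
    simp only [interior_Ioi]
  · exact fun y hy ↦ (hasDerivAt_igScore hσ.ne' hy).hasDerivWithinAt
  · exact fun y hy ↦ igScoreDeriv_pos hμ hσ ht hy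

lemma image_igScore_Ioi (hμ : 0 < μ) (hσ : σ ≠ 0) (ht : 0 < t) :
    igScore μ σ t '' Ioi 0 = univ := by
  refine eq_univ_of_forall fun s ↦ ?_
  set R := √((s * σ) ^ 2 + 4 * μ * t)
  have hR : R ^ 2 = (s * σ) ^ 2 + 4 * μ * t := sq_sqrt (by positivity)
  have hsR : |s * σ| < R := by
    rw [← sqrt_sq_eq_abs]; exact sqrt_lt_sqrt (sq_nonneg _) (by linarith [mul_pos hμ ht])
  -- `u = √y` solves `μ u ^ 2 - σ s u - t = 0`
  set u := (s * σ + R) / (2 * μ)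
  have hu : 0 < u := div_pos (by linarith [neg_abs_le (s * σ)]) (by positivity)
  refine ⟨u ^ 2, pow_pos hu 2, ?_⟩
  have hroot : μ * u ^ 2 - t = σ * s * u := by
    simp only [u]; field_simp; linear_combination hR
  rw [igScore, sqrt_sq hu.le, hroot]
  field_simp

lemma igScore_div (hμ : 0 < μ) (ht : 0 < t) {y : ℝ} (hy : 0 < y) :
    igScore μ σ t ((t / μ) ^ 2 / y) = -igScore μ σ t y := by
  rcases eq_or_ne σ 0 with rfl | hσ
  · simp [igScore]
  have hsqrt : 0 < √y := sqrt_pos.2 hy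
  rw [igScore, igScore, sqrt_div' _ hy.le, sqrt_sq (by positivity)]
  field_simp
  linear_combination (t - μ * y) * sq_sqrt hy.le

lemma integral_igScoreDeriv_mul_comp (hμ : 0 < μ) (hσ : 0 < σ) (ht : 0 < t) (g : ℝ → ℝ) :
    ∫ y in Ioi 0, igScoreDeriv μ σ t y * g (igScore μ σ t y) = ∫ x, g x := by
  have h := integral_image_eq_integral_abs_deriv_smul measurableSet_Ioi
    (fun y hy ↦ (hasDerivAt_igScore hσ.ne' hy).hasDerivWithinAt)
    (strictMonoOn_igScore hμ.le hσ ht).injOn g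
  rw [image_igScore_Ioi hμ hσ.ne' ht, setIntegral_univ] at h
  rw [h]
  refine setIntegral_congr_fun measurableSet_Ioi fun y hy ↦ ?_
  rw [smul_eq_mul, abs_of_pos (igScoreDeriv_pos hμ.le hσ ht hy)]

lemma integrableOn_igScoreDeriv_mul_comp (hμ : 0 < μ) (hσ : 0 < σ) (ht : 0 < t) {g : ℝ → ℝ}
    (hg : Integrable g) :
    IntegrableOn (fun y ↦ igScoreDeriv μ σ t y * g (igScore μ σ t y)) (Ioi 0) := by
  have h := integrableOn_image_iff_integrableOn_abs_deriv_smul measurableSet_Ioi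
    (fun y hy ↦ (hasDerivAt_igScore hσ.ne' hy).hasDerivWithinAt)
    (strictMonoOn_igScore hμ.le hσ ht).injOn g
  rw [image_igScore_Ioi hμ hσ.ne' ht, integrableOn_univ] at h
  refine (h.1 hg).congr_fun (fun y hy ↦ ?_) measurableSet_Ioi
  dsimp only
  rw [smul_eq_mul, abs_of_pos (igScoreDeriv_pos hμ.le hσ ht hy)]

lemma abs_igScore_div_le (hμ : 0 ≤ μ) (hσ : 0 < σ) (ht : 0 ≤ t) {y : ℝ} (hy : 0 < y) :
    |igScore μ σ t y / (2 * y)| ≤ igScoreDeriv μ σ t y := by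
  have hsqrt := sqrt_pos.2 hy
  have h : igScore μ σ t y / (2 * y) = (μ * y - t) / (2 * σ * (y * √y)) := by
    unfold igScore; field_simp
  rw [h, abs_div, abs_of_pos (by positivity : (0 : ℝ) < 2 * σ * (y * √y)), igScoreDeriv]
  have := mul_nonneg hμ hy.le
  gcongr
  exact abs_le.2 ⟨by linarith, by linarith⟩

lemma igDensity_eq_sub (hσ : σ ≠ 0) {y : ℝ} (hy : 0 < y) :
    igDensity μ σ t y = igScoreDeriv μ σ t y * gaussianPDFReal 0 1 (igScore μ σ t y)
      - igScore μ σ t y / (2 * y) * gaussianPDFReal 0 1 (igScore μ σ t y) := by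
  have hsqrt := sqrt_pos.2 hy
  have hcoef : igScoreDeriv μ σ t y - igScore μ σ t y / (2 * y) = t / (σ * (y * √y)) := by
    unfold igScoreDeriv igScore; field_simp; ring
  have hnorm : √(2 * π * y ^ 3) = √(2 * π) * (y * √y) := by
    rw [show 2 * π * y ^ 3 = 2 * π * (y * √y) ^ 2 by rw [mul_pow, sq_sqrt hy.le]; ring,
      sqrt_mul (by positivity), sqrt_sq (by positivity)]
  have hexp : -(μ * y - t) ^ 2 / (2 * y * σ ^ 2)
      = -(igScore μ σ t y - 0) ^ 2 / (2 * ((1 : NNReal) : ℝ)) := by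
    rw [igScore, sub_zero, div_pow, mul_pow, sq_sqrt hy.le]; push_cast; field_simp
  rw [← sub_mul, hcoef, igDensity, if_pos hy, gaussianPDFReal, hnorm, hexp]
  push_cast
  field_simp

end igScore

lemma integral_Ioi_eq_zero_of_smul_comp_div_eq_neg {E : Type*} [NormedAddCommGroup E]
    [NormedSpace ℝ E] {c : ℝ} (hc : 0 < c) {f : ℝ → E}
    (hf : ∀ y > 0, (c / y ^ 2) • f (c / y) = -f y) : ∫ y in Ioi 0, f y = 0 := by
  have hderiv : ∀ y ∈ Ioi (0 : ℝ), HasDerivWithinAt (c / ·) (-(c / y ^ 2)) (Ioi 0) y :=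
    fun y hy ↦ ((hasDerivAt_inv hy.out.ne').const_mul c).hasDerivWithinAt.congr_deriv (by ring)
  have hinj : InjOn (c / ·) (Ioi (0 : ℝ)) := fun a _ b _ h ↦ by
    simpa [div_eq_mul_inv, hc.ne'] using h
  have himage : (c / ·) '' Ioi (0 : ℝ) = Ioi 0 := by
    refine Subset.antisymm (image_subset_iff.2 fun y hy ↦ div_pos hc hy) fun y hy ↦ ?_
    exact ⟨c / y, div_pos hc hy, div_div_cancel₀ hc.ne'⟩
  have h := integral_image_eq_integral_abs_deriv_smul measurableSet_Ioi hderiv hinj f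
  have hneg : ∫ y in Ioi 0, |-(c / y ^ 2)| • f (c / y) = -∫ y in Ioi 0, f y := by
    rw [← integral_neg]
    exact setIntegral_congr_fun measurableSet_Ioi fun y hy ↦ by
      rw [abs_neg, abs_of_pos (div_pos hc (pow_pos hy 2)), hf y hy]
  rw [himage, hneg] at h
  have h2 : (2 : ℝ) • ∫ y in Ioi 0, f y = 0 := by
    rw [two_smul]; nth_rewrite 1 [h]; exact neg_add_cancel _
  exact (smul_eq_zero.1 h2).resolve_left two_ne_zero

theorem integral_igDensity {μ σ t : ℝ} (hμ : 0 < μ) (hσ : 0 < σ) (ht : 0 < t) :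
    ∫ y in Ioi 0, igDensity μ σ t y = 1 := by
  have hA := integrableOn_igScoreDeriv_mul_comp hμ hσ ht (integrable_gaussianPDFReal 0 1)
  have hB : IntegrableOn
      (fun y ↦ igScore μ σ t y / (2 * y) * gaussianPDFReal 0 1 (igScore μ σ t y)) (Ioi 0) := by
    refine hA.mono' (by unfold igScore; fun_prop) <|
      (ae_restrict_iff' measurableSet_Ioi).2 (.of_forall fun y hy ↦ ?_)
    rw [norm_mul, norm_eq_abs, norm_of_nonneg (gaussianPDFReal_nonneg _ _ _)]
    exact mul_le_mul_of_nonneg_right (abs_igScore_div_le hμ.le hσ ht.le hy)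
      (gaussianPDFReal_nonneg _ _ _)
  have hB0 :
      ∫ y in Ioi 0, igScore μ σ t y / (2 * y) * gaussianPDFReal 0 1 (igScore μ σ t y) = 0 := by
    refine integral_Ioi_eq_zero_of_smul_comp_div_eq_neg (c := (t / μ) ^ 2) (by positivity)
      fun y hy ↦ ?_
    rw [igScore_div hμ ht hy, gaussianPDFReal_zero_neg, smul_eq_mul]
    field_simp
  rw [setIntegral_congr_fun measurableSet_Ioi fun y hy ↦ igDensity_eq_sub hσ.ne' hy,
    integral_sub hA hB, hB0, integral_igScoreDeriv_mul_comp hμ hσ ht,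
    integral_gaussianPDFReal_eq_one 0 one_ne_zero, sub_zero]

lemma exp_neg_mul_mul_igDensity {μ σ t α ν : ℝ} (hσ : σ ≠ 0)
    (hν : ν ^ 2 = 2 * α * σ ^ 2 + μ ^ 2) (y : ℝ) :
    exp (-α * y) * igDensity μ σ t y = exp (-(t / σ ^ 2) * (ν - μ)) * igDensity ν σ t y := by
  unfold igDensity
  split_ifs with hy
  · have hexp : exp (-α * y) * exp (-(μ * y - t) ^ 2 / (2 * y * σ ^ 2))
        = exp (-(t / σ ^ 2) * (ν - μ)) * exp (-(ν * y - t) ^ 2 / (2 * y * σ ^ 2)) := by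
      rw [← exp_add, ← exp_add]
      congr 1
      field_simp
      linear_combination y ^ 2 * hν
    linear_combination t / (σ * √(2 * π * y ^ 3)) * hexp
  · simp

theorem laplace_of_inverse_gaussian_density
    (μ σ t α : ℝ) (hμ : 0 < μ) (hσ : 0 < σ) (ht : 0 < t) (hα : 0 ≤ α) :
    ∫ y in Set.Ioi (0 : ℝ), Real.exp (-α * y) * igDensity μ σ t y
      = Real.exp (-(t / σ ^ 2) * (Real.sqrt (2 * α * σ ^ 2 + μ ^ 2) - μ)) := by
  have hrad : 0 < 2 * α * σ ^ 2 + μ ^ 2 := by positivity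
  simp_rw [exp_neg_mul_mul_igDensity hσ.ne' (sq_sqrt hrad.le)]
  rw [integral_const_mul, integral_igDensity (sqrt_pos.2 hrad) hσ ht, mul_one]
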